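/- Let S ⊆ M be a finitely generated subsemigroup with S - S = M such that Spec k[S] is seminormal. The conductor ideal I = ⊕_{m : m + S̄ ⊆ S} k·χ^m of the normalization k[S] ⊆ k[S̄] (where S̄ = M ∩ σ_S) is a radical ideal; more precisely, {m ∈ S : m + S̄ ⊆ S} = S \ ⋃_{σ ∈ Δ'} σ, where Δ' is the set of faces σ of σ_S with (S ∩ σ) - (S ∩ σ) strictly contained in (M ∩ σ) ∩ σ - (M ∩ σ) ∩ σ. -/

import Mathlib

open scoped BigOperators

/-- The convex cone generated by a set `s` in a real vector space. -/
def coneOf {V : Type} [AddCommGroup V] [Module ℝ V] (s : Set V) : Set V :=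
  {x | ∃ (n : ℕ) (c : Fin n → ℝ) (v : Fin n → V),
    (∀ i, 0 ≤ c i) ∧ (∀ i, v i ∈ s) ∧ x = ∑ i, c i • v i}

/-- `τ` is a face of the cone `σ`. -/
def IsFaceOf {V : Type} [AddCommGroup V] [Module ℝ V] (τ σ : Set V) : Prop :=
  τ ⊆ σ ∧ (0 : V) ∈ τ ∧ (∀ x ∈ τ, ∀ y ∈ τ, x + y ∈ τ) ∧
    (∀ x ∈ τ, ∀ c : ℝ, 0 ≤ c → c • x ∈ τ) ∧
    ∀ x ∈ σ, ∀ y ∈ σ, x + y ∈ τ → x ∈ τ ∧ y ∈ τ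

/-- The dimension of the linear span of a set. -/
noncomputable def coneDim {V : Type} [AddCommGroup V] [Module ℝ V] (s : Set V) : ℕ :=
  Module.finrank ℝ (Submodule.span ℝ s)

/-- `τ` is a codimension-one face of the cone `σ`. -/
def IsCodimOneFace {V : Type} [AddCommGroup V] [Module ℝ V] (τ σ : Set V) : Prop :=
  IsFaceOf τ σ ∧ coneDim τ + 1 = coneDim σ

/-- `M` is a (full) lattice in the real vector space `V`. -/
def IsLattice {V : Type} [AddCommGroup V] [Module ℝ V] (M : AddSubgroup V) : Prop :=
  ∃ (n : ℕ) (b : Fin n → V), LinearIndependent ℝ b ∧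
    Submodule.span ℝ (Set.range b) = ⊤ ∧ M = AddSubgroup.closure (Set.range b)

/-- The group of differences `A - A` of a set `A`. -/
def latticeOf {V : Type} [AddCommGroup V] (A : Set V) : Set V :=
  {x | ∃ a ∈ A, ∃ b ∈ A, x = a - b}

/-- The group of differences `(A ∩ σ) - (A ∩ σ)`. -/
def diffSet {V : Type} [AddCommGroup V] (A σ : Set V) : Set V :=
  {x | ∃ a ∈ A ∩ σ, ∃ b ∈ A ∩ σ, x = a - b}

/-!
If `m` lies in the conductor and on a face `σ`, translation by `m` maps `(M ∩ σ) - (M ∩ σ)` into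
`(S ∩ σ) - (S ∩ σ)`, so `σ ∉ Δ'`. Conversely, for `m ∈ S` off all faces of `Δ'` and `b ∈ S̄`, the
point `m + b` lies in the relative interior of the face `F` of `σ_S` it generates, and `m ∈ F`;
as `F ∉ Δ'`, `m + b ∈ (S ∩ F) - (S ∩ F)`, so seminormality gives `m + b ∈ S`.

Hence the complement of the conductor in `S` is a union of faces. For a face `P`, the map
`χ^a ↦ [a ∈ P] χ^a` is a ring endomorphism of `k[S]` killing the conductor ideal `I`. If `y^n ∈ I`
but `χ^s ∉ I` for some `s` in the support of `y`, choose `P ∋ s`: the image of `y` is then a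
nonzero nilpotent in the domain `k[S]`.
-/

theorem Convex.mem_intrinsicInterior_of_forall_exists_add_smul_sub_mem {V : Type*}
    [NormedAddCommGroup V] [NormedSpace ℝ V] [FiniteDimensional ℝ V] {C : Set V} {x : V}
    (hC : Convex ℝ C) (hx : x ∈ C) (h : ∀ p ∈ C, ∃ ε : ℝ, 0 < ε ∧ x + ε • (x - p) ∈ C) :
    x ∈ intrinsicInterior ℝ C := by
  -- In the direction of `affineSpan ℝ C` the transported set `D` has nonempty interior, and `x`
  -- lies in the open segment from an interior point `p` to `x + ε • (x - p)`.
  have : Nonempty C := ⟨⟨x, hx⟩⟩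
  set A := affineSpan ℝ C
  let e := (AffineIsometryEquiv.constVSub ℝ (⟨x, subset_affineSpan ℝ C hx⟩ : A)).symm
  have he : ∀ v, ((e v : A) : V) = x - v := fun v => by simp [e]; abel
  set D : Set A.direction := e ⁻¹' ((↑) ⁻¹' C)
  have hD : Convex ℝ D := hC.affine_preimage (A.subtype.comp e.toAffineEquiv.toAffineMap)
  have hspan : affineSpan ℝ D = ⊤ := by
    simp only [D]
    rw [← AffineIsometryEquiv.coe_toAffineEquiv, ← AffineSubspace.comap_span,
      affineSpan_coe_preimage_eq_top, AffineSubspace.comap_top]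
  obtain ⟨p, hp⟩ := hD.interior_nonempty_iff_affineSpan_eq_top.2 hspan
  obtain ⟨ε, hε, hxε⟩ := h _ (interior_subset hp : p ∈ D)
  have hq : -ε • p ∈ D := by
    show _ ∈ C
    convert hxε using 1
    rw [he, he, Submodule.coe_smul]
    module
  have h0 : (0 : A.direction) ∈ openSegment ℝ p (-ε • p) :=
    ⟨ε / (1 + ε), 1 / (1 + ε), by positivity, by positivity, by field_simp; ring, by
      rw [smul_smul]; field_simp; module⟩
  have h0int : 0 ∈ e.toHomeomorph ⁻¹' interior ((↑) ⁻¹' C) := by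
    rw [Homeomorph.preimage_interior]
    exact hD.openSegment_interior_self_subset_interior hp hq h0
  rw [mem_intrinsicInterior]
  exact ⟨e 0, h0int, by simp [he]⟩

theorem coneOf_eq_hull {V : Type} [AddCommGroup V] [Module ℝ V] (s : Set V) :
    coneOf s = (PointedCone.hull ℝ s : Set V) := by
  ext x
  rw [SetLike.mem_coe, Submodule.mem_span_set']
  constructor
  · rintro ⟨n, c, v, hc, hv, rfl⟩
    exact ⟨n, fun i => ⟨c i, hc i⟩, fun i => ⟨v i, hv i⟩, rfl⟩
  · rintro ⟨n, c, v, rfl⟩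
    exact ⟨n, fun i => c i, fun i => v i, fun i => (c i).2, fun i => (v i).2, rfl⟩

section Faces

variable {V : Type} [AddCommGroup V] [Module ℝ V] {τ σ : Set V}

theorem IsFaceOf.subset (h : IsFaceOf τ σ) : τ ⊆ σ := h.1

theorem IsFaceOf.add_mem (h : IsFaceOf τ σ) {x y : V} (hx : x ∈ τ) (hy : y ∈ τ) : x + y ∈ τ :=
  h.2.2.1 x hx y hy

theorem IsFaceOf.mem_of_add_mem (h : IsFaceOf τ σ) {x y : V} (hx : x ∈ σ) (hy : y ∈ σ)
    (hxy : x + y ∈ τ) : x ∈ τ ∧ y ∈ τ :=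
  h.2.2.2.2 x hx y hy hxy

def IsFaceOf.toAddSubmonoid (h : IsFaceOf τ σ) : AddSubmonoid V where
  carrier := τ
  add_mem' := h.add_mem
  zero_mem' := h.2.1

end Faces

section DiffSet

variable {V : Type} [AddCommGroup V]

theorem diffSet_mono {A B : Set V} (h : A ⊆ B) (σ : Set V) : diffSet A σ ⊆ diffSet B σ := by
  rintro _ ⟨a, ⟨haA, haσ⟩, b, ⟨hbA, hbσ⟩, rfl⟩
  exact ⟨a, ⟨h haA, haσ⟩, b, ⟨h hbA, hbσ⟩, rfl⟩

theorem diffSet_subset_of_add_mem {A B σ : Set V} {m : V} (hm : m ∈ σ)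
    (hσ : ∀ x ∈ σ, ∀ y ∈ σ, x + y ∈ σ) (h : ∀ b ∈ B ∩ σ, m + b ∈ A) :
    diffSet B σ ⊆ diffSet A σ := by
  rintro _ ⟨a, ha, b, hb, rfl⟩
  exact ⟨m + a, ⟨h a ha, hσ m hm a ha.2⟩, m + b, ⟨h b hb, hσ m hm b hb.2⟩, by abel⟩

end DiffSet

namespace PointedCone

variable {V : Type} [AddCommGroup V] [Module ℝ V] (C : PointedCone ℝ V) (x : V)

def generatedFace : PointedCone ℝ V where
  carrier := {y | y ∈ C ∧ ∃ c : ℝ, c • x - y ∈ C}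
  add_mem' := by
    rintro y z ⟨hy, c, hc⟩ ⟨hz, d, hd⟩
    exact ⟨C.add_mem hy hz, c + d, by convert C.add_mem hc hd using 1; module⟩
  zero_mem' := ⟨C.zero_mem, 0, by simp⟩
  smul_mem' := by
    rintro ⟨t, ht⟩ y ⟨hy, c, hc⟩
    refine ⟨C.smul_mem ht hy, t * c, ?_⟩
    convert C.smul_mem ht hc using 1
    rw [smul_sub, mul_smul]
    rfl

variable {C x}

theorem self_mem_generatedFace (hx : x ∈ C) : x ∈ C.generatedFace x :=
  ⟨hx, 1, by simp⟩

theorem isFaceOf_generatedFace : _root_.IsFaceOf (C.generatedFace x : Set V) C := by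
  refine ⟨fun y hy => hy.1, (C.generatedFace x).zero_mem, fun y hy z hz => add_mem hy hz,
    fun y hy c hc => (C.generatedFace x).smul_mem hc hy, ?_⟩
  rintro y hy z hz ⟨-, c, hc⟩
  refine ⟨⟨hy, c, ?_⟩, ⟨hz, c, ?_⟩⟩
  · convert C.add_mem hc hz using 1; abel
  · convert C.add_mem hc hy using 1; abel

end PointedCone

theorem PointedCone.self_mem_intrinsicInterior_generatedFace {V : Type} [NormedAddCommGroup V]
    [NormedSpace ℝ V] [FiniteDimensional ℝ V] {C : PointedCone ℝ V} {x : V} (hx : x ∈ C) :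
    x ∈ intrinsicInterior ℝ (C.generatedFace x : Set V) := by
  refine (C.generatedFace x).convex.mem_intrinsicInterior_of_forall_exists_add_smul_sub_mem
    (self_mem_generatedFace hx) fun p ⟨hp, c, hc⟩ => ?_
  obtain ⟨a, hca, ha⟩ : ∃ a : ℝ, c ≤ a ∧ 0 < a :=
    ⟨|c| + 1, by linarith [le_abs_self c], by positivity⟩
  have hap : a • x - p ∈ C := by
    convert C.add_mem (C.smul_mem (sub_nonneg.2 hca) hx) hc using 1
    module
  have hq : x + (a • x - p) ∈ C.generatedFace x :=
    ⟨C.add_mem hx hap, 1 + a, by convert hp using 1; module⟩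
  have hxp : x + a⁻¹ • (x - p) = a⁻¹ • (x + (a • x - p)) := by
    simp only [smul_add, smul_sub, smul_smul, inv_mul_cancel₀ ha.ne', one_smul]
    abel
  refine ⟨a⁻¹, inv_pos.2 ha, ?_⟩
  rw [hxp]
  exact (C.generatedFace x).smul_mem (inv_nonneg.2 ha.le) hq

section Conductor

variable {V : Type} [NormedAddCommGroup V] [NormedSpace ℝ V] [FiniteDimensional ℝ V]
  {M : AddSubmonoid V} {S : Set V} {C : PointedCone ℝ V}

theorem conductor_eq_sdiff_iUnion (hSM : S ⊆ M) (hSC : S ⊆ C)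
    (hsn : ∀ m : V, (∃ σ : Set V, IsFaceOf σ C ∧ m ∈ diffSet S σ ∩ intrinsicInterior ℝ σ) →
      m ∈ S) :
    {m : V | m ∈ S ∧ ∀ b ∈ (M : Set V) ∩ C, m + b ∈ S}
      = S \ ⋃ σ ∈ {σ : Set V | IsFaceOf σ C ∧ diffSet S σ ⊂ diffSet (M : Set V) σ}, σ := by
  ext m
  simp only [Set.mem_ofPred_eq, Set.mem_sdiff, Set.mem_iUnion, exists_prop, not_exists, not_and]
  refine and_congr_right fun hmS => ⟨?_, ?_⟩
  · rintro hcond σ ⟨hface, hss⟩ hmσ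
    exact hss.not_subset (diffSet_subset_of_add_mem hmσ (fun _ hx _ hy => hface.add_mem hx hy)
      fun b hb => hcond b ⟨hb.1, hface.subset hb.2⟩)
  · rintro hnot b ⟨hbM, hbC⟩
    have hx : m + b ∈ C := C.add_mem (hSC hmS) hbC
    set F := (C.generatedFace (m + b) : Set V)
    have hface : IsFaceOf F C := PointedCone.isFaceOf_generatedFace
    have hmF : m ∈ F :=
      (hface.mem_of_add_mem (hSC hmS) hbC (PointedCone.self_mem_generatedFace hx)).1
    have hdiff : diffSet S F = diffSet M F :=
      (diffSet_mono hSM F).eq_of_not_ssubset fun hss => hnot F ⟨hface, hss⟩ hmF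
    refine hsn _ ⟨F, hface, ?_, PointedCone.self_mem_intrinsicInterior_generatedFace hx⟩
    rw [hdiff]
    exact ⟨m + b, ⟨M.add_mem (hSM hmS) hbM, PointedCone.self_mem_generatedFace hx⟩,
      0, ⟨M.zero_mem, (C.generatedFace (m + b)).zero_mem⟩, (sub_zero _).symm⟩

end Conductor

namespace AddMonoidAlgebra

variable {k G : Type*}

theorem setOf_exists_and_eq_single_one [Semiring k] (p : G → Prop) :
    {x : AddMonoidAlgebra k G | ∃ s, p s ∧ x = single s 1} = of' k G '' {s | p s} := by
  ext
  simp [of', eq_comm]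

variable [CommSemiring k] [AddCommMonoid G]

noncomputable def faceProjection (P : AddSubmonoid G) (hP : ∀ a b, a + b ∈ P → a ∈ P) :
    AddMonoidAlgebra k G →ₐ[k] AddMonoidAlgebra k G :=
  lift k (AddMonoidAlgebra k G) G
    { toFun := fun a => (P : Set G).indicator (of' k G) a.toAdd
      map_one' := by simp [P.zero_mem, of', one_def]
      map_mul' := fun a b => by
        by_cases ha : a.toAdd ∈ P <;> by_cases hb : b.toAdd ∈ P
        · simp [ha, hb, P.add_mem, of', single_mul_single]
        · have : a.toAdd + b.toAdd ∉ P := fun h => hb (hP _ _ (add_comm a.toAdd _ ▸ h))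
          simp [hb, this]
        all_goals
          have : a.toAdd + b.toAdd ∉ P := fun h => ha (hP _ _ h)
          simp [ha, this] }

variable {P : AddSubmonoid G} {hP : ∀ a b, a + b ∈ P → a ∈ P}

theorem faceProjection_of'_of_notMem {t : G} (ht : t ∉ P) :
    faceProjection (k := k) P hP (of' k G t) = 0 := by
  simp [faceProjection, ht]

theorem coeff_faceProjection_of_mem {s : G} (hs : s ∈ P) (f : AddMonoidAlgebra k G) :
    (faceProjection P hP f).coeff s = f.coeff s := by
  induction f using AddMonoidAlgebra.induction_linear with
  | zero => simp
  | add f g hf hg => simp [coeff_add, hf, hg]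
  | single a r =>
    by_cases ha : a ∈ P
    · simp [faceProjection, ha, of', coeff_single]
    · simp [faceProjection, ha, coeff_single, show a ≠ s by rintro rfl; exact ha hs]

theorem isRadical_span_of'_image [IsReduced (AddMonoidAlgebra k G)] {T : Set G}
    (hT : ∀ a ∉ T, ∃ P : AddSubmonoid G,
      (∀ b c, b + c ∈ P → b ∈ P) ∧ a ∈ P ∧ Disjoint (P : Set G) T) :
    (Ideal.span (of' k G '' T)).IsRadical := by
  rintro y ⟨n, hn⟩
  rw [mem_ideal_span_of'_image]
  intro s hs
  refine ⟨s, ?_, 0, (zero_add s).symm⟩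
  by_contra hsT
  obtain ⟨P, hP, hsP, hPT⟩ := hT s hsT
  have hker : Ideal.span (of' k G '' T) ≤ RingHom.ker (faceProjection (k := k) P hP) := by
    rw [Ideal.span_le]
    rintro _ ⟨t, ht, rfl⟩
    exact faceProjection_of'_of_notMem (hPT.notMem_of_mem_right ht)
  have hy : faceProjection P hP y = 0 :=
    IsNilpotent.eq_zero ⟨n, by rw [← map_pow]; exact hker hn⟩
  rw [Finsupp.mem_support_iff, ← coeff_faceProjection_of_mem (hP := hP) hsP, hy] at hs
  exact hs rfl

end AddMonoidAlgebra

theorem AddSubmonoid.isReduced_addMonoidAlgebra {V : Type*} [AddCommGroup V] [Module ℚ V]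
    (k : Type*) [Semiring k] [NoZeroDivisors k] (S : AddSubmonoid V) :
    IsReduced (AddMonoidAlgebra k S) :=
  have : UniqueSums S :=
    .of_injective_addHom S.subtype.toAddHom Subtype.coe_injective inferInstance
  inferInstance

theorem stmt_3_general {V : Type} [NormedAddCommGroup V] [NormedSpace ℝ V] [FiniteDimensional ℝ V]
    (k : Type) [Field k]
    (M : AddSubgroup V)
    (S : AddSubmonoid V)
    (hSM : ∀ m : V, m ∈ M ↔ ∃ s ∈ S, ∃ t ∈ S, m = s - t)
    (σS : Set V) (hσS : σS = coneOf (S : Set V))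
    (hsn : ∀ m : V, m ∈ S ↔ ∃ σ : Set V, IsFaceOf σ σS ∧
      m ∈ diffSet (S : Set V) σ ∩ intrinsicInterior ℝ σ) :
    {m : V | m ∈ S ∧ ∀ b ∈ (M : Set V) ∩ σS, m + b ∈ S}
      = (S : Set V) \
        ⋃ σ ∈ {σ : Set V | IsFaceOf σ σS ∧ diffSet (S : Set V) σ ⊂ diffSet (M : Set V) σ}, σ
    ∧ (Ideal.span {x : AddMonoidAlgebra k ↥S | ∃ s : ↥S,
        (∀ b ∈ (M : Set V) ∩ σS, (s : V) + b ∈ S) ∧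
        x = AddMonoidAlgebra.single s 1}).IsRadical := by
  subst hσS
  rw [coneOf_eq_hull] at hsn ⊢
  have hSC : (S : Set V) ⊆ PointedCone.hull ℝ (S : Set V) := PointedCone.subset_hull
  have hcond := conductor_eq_sdiff_iUnion (M := M.toAddSubmonoid)
    (fun s hs => (hSM s).2 ⟨s, hs, 0, S.zero_mem, (sub_zero s).symm⟩) hSC fun m hm => (hsn m).2 hm
  refine ⟨hcond, ?_⟩
  let _ : Module ℚ V := Module.compHom V (algebraMap ℚ ℝ)
  have := S.isReduced_addMonoidAlgebra k
  rw [AddMonoidAlgebra.setOf_exists_and_eq_single_one]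
  refine AddMonoidAlgebra.isRadical_span_of'_image fun s hs => ?_
  obtain ⟨σ, ⟨hface, hss⟩, hsσ⟩ :=
    Set.mem_iUnion₂.1 <| by_contra fun h => hs (hcond.symm.subset ⟨s.2, h⟩).2
  refine ⟨hface.toAddSubmonoid.comap S.subtype,
    fun a b hab => (hface.mem_of_add_mem (hSC a.2) (hSC b.2) hab).1, hsσ, ?_⟩
  exact Set.disjoint_left.2 fun t htσ ht =>
    (hcond.subset ⟨t.2, ht⟩).2 (Set.mem_biUnion ⟨hface, hss⟩ htσ)

/-- For a seminormal finitely generated semigroup `S` with `S - S = M`, the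
conductor ideal `I = ⊕_{m + S̄ ⊆ S} k·χ^m` of the normalization `k[S] ⊆ k[S̄]`
(`S̄ = M ∩ σS`) is a radical ideal; more precisely
`{m ∈ S : m + S̄ ⊆ S} = S \ ⋃_{σ ∈ Δ'} σ`, where `Δ'` is the set of faces `σ` of `σS` with
`(S∩σ) - (S∩σ)` strictly contained in `(M∩σ) - (M∩σ)`. -/
theorem stmt_3 {V : Type} [NormedAddCommGroup V] [NormedSpace ℝ V] [FiniteDimensional ℝ V]
    (k : Type) [Field k]
    (M : AddSubgroup V) (hM : IsLattice M)
    (S : AddSubmonoid V) (hfg : S.FG)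
    (hSM : ∀ m : V, m ∈ M ↔ ∃ s ∈ S, ∃ t ∈ S, m = s - t)
    (σS : Set V) (hσS : σS = coneOf (S : Set V))
    (hsn : ∀ m : V, m ∈ S ↔ ∃ σ : Set V, IsFaceOf σ σS ∧
      m ∈ diffSet (S : Set V) σ ∩ intrinsicInterior ℝ σ) :
    {m : V | m ∈ S ∧ ∀ b ∈ (M : Set V) ∩ σS, m + b ∈ S}
      = (S : Set V) \
        ⋃ σ ∈ {σ : Set V | IsFaceOf σ σS ∧ diffSet (S : Set V) σ ⊂ diffSet (M : Set V) σ}, σ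
    ∧ (Ideal.span {x : AddMonoidAlgebra k ↥S | ∃ s : ↥S,
        (∀ b ∈ (M : Set V) ∩ σS, (s : V) + b ∈ S) ∧
        x = AddMonoidAlgebra.single s 1}).IsRadical :=
  stmt_3_general k M S hSM σS hσS hsn
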